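/- Let G be a connected graph of order n with vertex connectivity k (1 ≤ k ≤ n-2). Then HM(G) ≤ 4·C(k,2)(n-1)^2 + 4·C(n-k-1,2)(n-2)^2 + k(n-k-1)(2n-3)^2 + k(n+k-1)^2, with equality if and only if G ≅ (K_1 ∪ K_{n-k-1}) ∨ K_k. -/

import Mathlib

open scoped Classical

/-- The hyper-Zagreb index: `HM(G) = Σ_{uv ∈ E(G)} (d(u)+d(v))²`. -/
noncomputable def hyperZagreb {V : Type*} [Fintype V] (G : SimpleGraph V) : ℕ := by
  classical
  exact ∑ e ∈ G.edgeFinset,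
    Sym2.lift ⟨fun u v => (G.degree u + G.degree v) ^ 2, fun u v => by simp [add_comm]⟩ e
/-- The graph `(K₁ ∪ K_{n-k-1}) ∨ K_k` on `Fin n`: the first `k` vertices form
the join part `K_k` (adjacent to everything), vertex `k` is the isolated-part
vertex, and the last `n - k - 1` vertices form a clique. -/
def joinOneClique (n k : ℕ) : SimpleGraph (Fin n) where
  Adj i j := i ≠ j ∧ ((i : ℕ) < k ∨ (j : ℕ) < k ∨ ((i : ℕ) ≠ k ∧ (j : ℕ) ≠ k))
  symm := by
    constructor
    intro i j ⟨h1, h2⟩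
    refine ⟨h1.symm, ?_⟩
    tauto
  loopless := by
    constructor
    intro i hi
    exact hi.1 rfl


/-- `G` has vertex connectivity `k`: some set of `k` vertices disconnects `G`,
and no smaller set does. -/
def HasVertexConnectivity {V : Type*} (G : SimpleGraph V) (k : ℕ) : Prop :=
  (∃ s : Set V, s.ncard = k ∧ ¬(G.induce sᶜ).Connected) ∧
    ∀ s : Set V, s.ncard < k → (G.induce sᶜ).Connected


section Aux
open Finset
variable {V : Type*} [Fintype V]

/-- weight function -/
noncomputable def wt (G : SimpleGraph V) : Sym2 V → ℕ :=
  Sym2.lift ⟨fun u v => (G.degree u + G.degree v) ^ 2, fun u v => by simp [add_comm]⟩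

lemma hyperZagreb_def (G : SimpleGraph V) : hyperZagreb G = ∑ e ∈ G.edgeFinset, wt G e := rfl

lemma degree_mono {G H : SimpleGraph V} (h : G ≤ H) (v : V) : G.degree v ≤ H.degree v := by
  classical
  exact Finset.card_le_card fun w hw => by
    rw [SimpleGraph.mem_neighborFinset] at hw ⊢; exact h hw

lemma wt_mono {G H : SimpleGraph V} (h : G ≤ H) (e : Sym2 V) : wt G e ≤ wt H e := by
  induction e with
  | _ u v =>
    simp only [wt, Sym2.lift_mk]
    exact Nat.pow_le_pow_left (Nat.add_le_add (degree_mono h u) (degree_mono h v)) 2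

lemma wt_pos {G : SimpleGraph V} {e : Sym2 V} (he : e ∈ G.edgeFinset) : 0 < wt G e := by
  induction e with
  | _ u v =>
    rw [SimpleGraph.mem_edgeFinset, SimpleGraph.mem_edgeSet] at he
    have h1 : 0 < G.degree u := by
      rw [← SimpleGraph.card_neighborFinset_eq_degree]
      exact Finset.card_pos.2 ⟨v, by rwa [SimpleGraph.mem_neighborFinset]⟩
    simp only [wt, Sym2.lift_mk]
    positivity

lemma hz_mono {G H : SimpleGraph V} (h : G ≤ H) : hyperZagreb G ≤ hyperZagreb H := by
  rw [hyperZagreb_def, hyperZagreb_def]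
  calc ∑ e ∈ G.edgeFinset, wt G e ≤ ∑ e ∈ G.edgeFinset, wt H e :=
        Finset.sum_le_sum fun e _ => wt_mono h e
    _ ≤ ∑ e ∈ H.edgeFinset, wt H e :=
        Finset.sum_le_sum_of_subset (SimpleGraph.edgeFinset_mono h)

lemma hz_strict_mono {G H : SimpleGraph V} (h : G ≤ H) (hne : G ≠ H) :
    hyperZagreb G < hyperZagreb H := by
  obtain ⟨e, heH, heG⟩ : ∃ e, e ∈ H.edgeFinset ∧ e ∉ G.edgeFinset := by
    by_contra hc
    push_neg at hc
    exact hne (le_antisymm h (SimpleGraph.edgeFinset_subset_edgeFinset.mp hc))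
  rw [hyperZagreb_def, hyperZagreb_def]
  calc ∑ e ∈ G.edgeFinset, wt G e ≤ ∑ e ∈ G.edgeFinset, wt H e :=
        Finset.sum_le_sum fun e _ => wt_mono h e
    _ < ∑ e ∈ H.edgeFinset, wt H e :=
        Finset.sum_lt_sum_of_subset (SimpleGraph.edgeFinset_mono h) heH heG (wt_pos heH)
          (fun _ _ _ => Nat.zero_le _)

lemma two_mul_sum_edgeFinset (G : SimpleGraph V) [DecidableRel G.Adj] (f : Sym2 V → ℕ) :
    2 * ∑ e ∈ G.edgeFinset, f e = ∑ v, ∑ w ∈ G.neighborFinset v, f s(v, w) := by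
  classical
  have key : ∑ d : G.Dart, f d.edge = 2 * ∑ e ∈ G.edgeFinset, f e := by
    rw [← Finset.sum_fiberwise_of_maps_to (g := fun d : G.Dart => d.edge) (t := G.edgeFinset)
      (fun d _ => by rw [SimpleGraph.mem_edgeFinset]; exact d.edge_mem) (fun d => f d.edge)]
    rw [Finset.mul_sum]
    refine Finset.sum_congr rfl fun e he => ?_
    have hcard : #({d : G.Dart | d.edge = e} : Finset _) = 2 :=
      G.dart_edge_fiber_card e (SimpleGraph.mem_edgeFinset.mp he)
    calc ∑ d ∈ ({d : G.Dart | d.edge = e} : Finset _), f d.edge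
        = ∑ _d ∈ ({d : G.Dart | d.edge = e} : Finset _), f e := by
          refine Finset.sum_congr rfl fun d hd => ?_
          rw [Finset.mem_filter] at hd
          rw [hd.2]
      _ = 2 * f e := by rw [Finset.sum_const, hcard]; ring
  rw [← key]
  rw [Fintype.sum_equiv (⟨fun d => ⟨d.fst, d.snd, d.adj⟩, fun p => ⟨(p.1, p.2.1), p.2.2⟩,
      fun d => rfl, fun p => rfl⟩ : G.Dart ≃ Σ v : V, G.neighborSet v)
    (fun d => f d.edge) (fun p => f s(p.1, p.2.1)) (fun d => rfl)]
  rw [← Finset.univ_sigma_univ, Finset.sum_sigma]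
  refine Finset.sum_congr rfl fun v _ => ?_
  rw [← Finset.sum_subtype (G.neighborFinset v)
    (fun w => by simp [SimpleGraph.mem_neighborFinset, SimpleGraph.mem_neighborSet])
    (fun w => f s(v, w))]

def compGraphF (A B : Finset V) : SimpleGraph V where
  Adj x y := x ≠ y ∧ ¬(x ∈ A ∧ y ∈ B) ∧ ¬(x ∈ B ∧ y ∈ A)
  symm := by constructor; intro x y h; refine ⟨h.1.symm, ?_, ?_⟩ <;> tauto
  loopless := ⟨fun x h => h.1 rfl⟩

lemma compGraphF_comm (A B : Finset V) : compGraphF A B = compGraphF B A := by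
  ext x y; constructor <;> (intro h; exact And.intro h.1 (And.intro h.2.2 h.2.1))

section comp
variable (A B : Finset V) (hd : Disjoint A B)

lemma comp_nf_S {x : V} (hxA : x ∉ A) (hxB : x ∉ B) :
    (compGraphF A B).neighborFinset x = univ.erase x := by
  ext w
  rw [SimpleGraph.mem_neighborFinset]
  simp only [SimpleGraph.mem_neighborFinset, compGraphF, mem_erase, mem_univ, and_true]
  constructor
  · exact fun h => h.1.symm
  · intro h; exact ⟨fun hh => h hh.symm, by tauto, by tauto⟩

lemma comp_nf_A {x : V} (hxA : x ∈ A) (hxB : x ∉ B) :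
    (compGraphF A B).neighborFinset x = (univ \ B).erase x := by
  ext w
  rw [SimpleGraph.mem_neighborFinset]
  simp only [SimpleGraph.mem_neighborFinset, compGraphF, mem_erase, mem_sdiff, mem_univ, true_and]
  constructor
  · intro h; exact ⟨fun hh => h.1 hh.symm, fun hw => h.2.1 ⟨hxA, hw⟩⟩
  · intro h; exact ⟨fun hh => h.1 hh.symm, fun hh => h.2 hh.2, fun hh => hxB hh.1⟩

lemma comp_deg_S {x : V} (hxA : x ∉ A) (hxB : x ∉ B) :
    (compGraphF A B).degree x = Fintype.card V - 1 := by
  rw [← SimpleGraph.card_neighborFinset_eq_degree, comp_nf_S A B hxA hxB,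
    card_erase_of_mem (mem_univ x), card_univ]

lemma comp_deg_A {x : V} (hxA : x ∈ A) (hxB : x ∉ B) :
    (compGraphF A B).degree x = Fintype.card V - #B - 1 := by
  rw [← SimpleGraph.card_neighborFinset_eq_degree, comp_nf_A A B hxA hxB,
    card_erase_of_mem (by simp [hxB]), card_sdiff_of_subset (subset_univ B), card_univ]

end comp

section comp2
variable (A B : Finset V)

lemma comp_deg_B {x : V} (hxB : x ∈ B) (hxA : x ∉ A) :
    (compGraphF A B).degree x = Fintype.card V - #A - 1 := by
  rw [compGraphF_comm]; exact comp_deg_A B A hxB hxA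

lemma univ_split (hd : Disjoint A B) (f : V → ℕ) :
    ∑ v, f v = ∑ v ∈ univ \ (A ∪ B), f v + ∑ v ∈ A, f v + ∑ v ∈ B, f v := by
  rw [add_assoc, ← sum_union hd, ← Finset.sum_sdiff (subset_univ (A ∪ B))]

lemma erase_split_S {A B : Finset V} {x : V} (hxA : x ∉ A) (hxB : x ∉ B) :
    univ.erase x = ((univ \ (A ∪ B)).erase x ∪ A) ∪ B := by
  ext w
  simp only [mem_erase, mem_univ, and_true, mem_union, mem_sdiff]
  constructor
  · intro hw
    by_cases hA : w ∈ A
    · tauto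
    by_cases hB : w ∈ B
    · tauto
    · exact Or.inl (Or.inl ⟨hw, by tauto⟩)
  · rintro ((⟨hw, _⟩ | h) | h)
    · exact hw
    · intro he; subst he; exact hxA h
    · intro he; subst he; exact hxB h

lemma sdiff_B_split {A B : Finset V} (hd : Disjoint A B) {x : V} (hx : x ∈ A) :
    (univ \ B).erase x = (univ \ (A ∪ B)) ∪ A.erase x := by
  ext w
  simp only [mem_erase, mem_union, mem_sdiff, mem_univ, true_and]
  constructor
  · intro ⟨hw, hB⟩
    by_cases hA : w ∈ A
    · exact Or.inr ⟨hw, hA⟩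
    · exact Or.inl (by tauto)
  · rintro (h | ⟨hw, hA⟩)
    · exact ⟨fun he => by subst he; exact h (Or.inl hx), fun hB => h (Or.inr hB)⟩
    · exact ⟨hw, fun hB => Finset.disjoint_left.mp hd hA hB⟩

lemma hz_comp (A B : Finset V) (hd : Disjoint A B) :
    2 * hyperZagreb (compGraphF A B) =
      #(univ \ (A ∪ B)) * ((#(univ \ (A ∪ B)) - 1) * ((Fintype.card V - 1) + (Fintype.card V - 1)) ^ 2
          + #A * ((Fintype.card V - 1) + (Fintype.card V - #B - 1)) ^ 2
          + #B * ((Fintype.card V - 1) + (Fintype.card V - #A - 1)) ^ 2)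
        + #A * (#(univ \ (A ∪ B)) * ((Fintype.card V - #B - 1) + (Fintype.card V - 1)) ^ 2
          + (#A - 1) * ((Fintype.card V - #B - 1) + (Fintype.card V - #B - 1)) ^ 2)
        + #B * (#(univ \ (A ∪ B)) * ((Fintype.card V - #A - 1) + (Fintype.card V - 1)) ^ 2
          + (#B - 1) * ((Fintype.card V - #A - 1) + (Fintype.card V - #A - 1)) ^ 2) := by
  classical
  set G := compGraphF A B with hG
  set n := Fintype.card V with hn
  set S : Finset V := univ \ (A ∪ B) with hS
  have hSA : Disjoint S A := Finset.sdiff_disjoint.mono_right subset_union_left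
  have hSB : Disjoint S B := Finset.sdiff_disjoint.mono_right subset_union_right
  have hdS : ∀ x, x ∉ A → x ∉ B → G.degree x = n - 1 := fun x hxA hxB => comp_deg_S A B hxA hxB
  have hdA : ∀ x ∈ A, G.degree x = n - #B - 1 := fun x hx =>
    comp_deg_A A B hx (Finset.disjoint_left.mp hd hx)
  have hdB : ∀ x ∈ B, G.degree x = n - #A - 1 := fun x hx =>
    comp_deg_B A B hx (Finset.disjoint_right.mp hd hx)
  have hmemS : ∀ x ∈ S, x ∉ A ∧ x ∉ B := by
    intro x hx
    rw [hS, mem_sdiff, mem_union] at hx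
    exact ⟨fun h => hx.2 (Or.inl h), fun h => hx.2 (Or.inr h)⟩
  have h2 : 2 * hyperZagreb G = ∑ v, ∑ w ∈ G.neighborFinset v, (G.degree v + G.degree w) ^ 2 := by
    rw [hyperZagreb_def, two_mul_sum_edgeFinset G (wt G)]
    simp only [wt, Sym2.lift_mk]
  rw [h2, univ_split A B hd]
  have innS : ∀ x ∈ S, ∑ w ∈ G.neighborFinset x, (G.degree x + G.degree w) ^ 2
      = (#S - 1) * ((n-1) + (n-1)) ^ 2 + #A * ((n-1) + (n - #B - 1)) ^ 2
        + #B * ((n-1) + (n - #A - 1)) ^ 2 := by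
    intro x hx
    obtain ⟨hxA, hxB⟩ := hmemS x hx
    rw [show G.neighborFinset x = ((S.erase x ∪ A) ∪ B) from by
        rw [comp_nf_S A B hxA hxB]; exact erase_split_S hxA hxB,
      sum_union (disjoint_union_left.mpr
        ⟨hSB.mono_left (erase_subset _ _), hd⟩),
      sum_union (hSA.mono_left (erase_subset _ _))]
    congr 1
    · congr 1
      · rw [sum_congr rfl (fun w hw => by
          rw [hdS x hxA hxB, hdS w (hmemS w (mem_of_mem_erase hw)).1
            (hmemS w (mem_of_mem_erase hw)).2]),
          sum_const, card_erase_of_mem hx, smul_eq_mul]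
      · rw [sum_congr rfl (fun w hw => by rw [hdS x hxA hxB, hdA w hw]), sum_const, smul_eq_mul]
    · rw [sum_congr rfl (fun w hw => by rw [hdS x hxA hxB, hdB w hw]), sum_const, smul_eq_mul]
  have innA : ∀ x ∈ A, ∑ w ∈ G.neighborFinset x, (G.degree x + G.degree w) ^ 2
      = #S * ((n - #B - 1) + (n-1)) ^ 2 + (#A - 1) * ((n - #B - 1) + (n - #B - 1)) ^ 2 := by
    intro x hx
    have hxB : x ∉ B := Finset.disjoint_left.mp hd hx
    rw [show G.neighborFinset x = S ∪ A.erase x from by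
        rw [comp_nf_A A B hx hxB]; exact sdiff_B_split hd hx,
      sum_union (hSA.mono_right (erase_subset _ _))]
    congr 1
    · rw [sum_congr rfl (fun w hw => by
        rw [hdA x hx, hdS w (hmemS w hw).1 (hmemS w hw).2]), sum_const, smul_eq_mul]
    · rw [sum_congr rfl (fun w hw => by
        rw [hdA x hx, hdA w (mem_of_mem_erase hw)]), sum_const, card_erase_of_mem hx,
        smul_eq_mul]
  have innB : ∀ x ∈ B, ∑ w ∈ G.neighborFinset x, (G.degree x + G.degree w) ^ 2
      = #S * ((n - #A - 1) + (n-1)) ^ 2 + (#B - 1) * ((n - #A - 1) + (n - #A - 1)) ^ 2 := by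
    intro x hx
    have hxA : x ∉ A := Finset.disjoint_right.mp hd hx
    have : G = compGraphF B A := by rw [hG, compGraphF_comm]
    rw [show G.neighborFinset x = S ∪ B.erase x from by
        rw [this, comp_nf_A B A hx hxA, sdiff_B_split hd.symm hx, union_comm B A],
      sum_union (hSB.mono_right (erase_subset _ _))]
    congr 1
    · rw [sum_congr rfl (fun w hw => by
        rw [hdB x hx, hdS w (hmemS w hw).1 (hmemS w hw).2]), sum_const, smul_eq_mul]
    · rw [sum_congr rfl (fun w hw => by
        rw [hdB x hx, hdB w (mem_of_mem_erase hw)]), sum_const, card_erase_of_mem hx,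
        smul_eq_mul]
  rw [sum_congr rfl innS, sum_congr rfl innA, sum_congr rfl innB,
    sum_const, sum_const, sum_const, smul_eq_mul, smul_eq_mul, smul_eq_mul]

def Fz (k a b : ℤ) : ℤ :=
  k * ((k-1) * ((k+a+b-1)+(k+a+b-1))^2 + a * ((k+a+b-1)+(k+a-1))^2
      + b * ((k+a+b-1)+(k+b-1))^2)
  + a * (k * ((k+a-1)+(k+a+b-1))^2 + (a-1) * ((k+a-1)+(k+a-1))^2)
  + b * (k * ((k+b-1)+(k+a+b-1))^2 + (b-1) * ((k+b-1)+(k+b-1))^2)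

lemma arithZ (k a b : ℤ) (hk : 1 ≤ k) (ha : 1 ≤ a) (hb : 1 ≤ b) :
    Fz k a b ≤ Fz k 1 (a+b-1) ∧ (Fz k a b = Fz k 1 (a+b-1) ↔ a = 1 ∨ b = 1) := by
  have key : Fz k 1 (a+b-1) - Fz k a b
      = (a-1) * (b-1) * (24*k^2+16*a^2+16*b^2+24*a*b+38*k*a+38*k*b-48*k-44*a-44*b+32) := by
    unfold Fz; ring
  have hQ : 2 ≤ a → 2 ≤ b →
      0 < (a-1) * (b-1) * (24*k^2+16*a^2+16*b^2+24*a*b+38*k*a+38*k*b-48*k-44*a-44*b+32) := by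
    intro h2a h2b
    have q1 : (0:ℤ) < a - 1 := by linarith
    have q2 : (0:ℤ) < b - 1 := by linarith
    have q3 : (0:ℤ) < 24*k^2+16*a^2+16*b^2+24*a*b+38*k*a+38*k*b-48*k-44*a-44*b+32 := by
      nlinarith [mul_nonneg (by linarith : (0:ℤ) ≤ a - 2) (by linarith : (0:ℤ) ≤ b - 2),
        mul_nonneg (by linarith : (0:ℤ) ≤ a - 2) (by linarith : (0:ℤ) ≤ k - 1),
        mul_nonneg (by linarith : (0:ℤ) ≤ b - 2) (by linarith : (0:ℤ) ≤ k - 1),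
        sq_nonneg (a-2), sq_nonneg (b-2), sq_nonneg (k-1), sq_nonneg (a-b)]
    positivity
  have hzero : ∀ x y : ℤ, x = 1 → (x-1) * (y-1) * (24*k^2+16*x^2+16*y^2+24*x*y+38*k*x+38*k*y-48*k-44*x-44*y+32) = 0 := by
    rintro x y rfl; ring
  have hge : 0 ≤ Fz k 1 (a+b-1) - Fz k a b := by
    by_cases h1 : a = 1
    · rw [key, hzero a b h1]
    by_cases h1' : b = 1
    · rw [key]
      have : (a-1) * (b-1) * (24*k^2+16*a^2+16*b^2+24*a*b+38*k*a+38*k*b-48*k-44*a-44*b+32)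
          = (b-1) * (a-1) * (24*k^2+16*b^2+16*a^2+24*b*a+38*k*b+38*k*a-48*k-44*b-44*a+32) := by
        ring
      rw [this, hzero b a h1']
    · have h2a : 2 ≤ a := by rcases eq_or_lt_of_le ha with h|h; exact absurd h.symm h1; linarith
      have h2b : 2 ≤ b := by rcases eq_or_lt_of_le hb with h|h; exact absurd h.symm h1'; linarith
      have := hQ h2a h2b
      linarith
  refine ⟨by linarith, ?_, ?_⟩
  · intro heq
    by_contra hc
    push_neg at hc
    have h2a : 2 ≤ a := by
      rcases eq_or_lt_of_le ha with h|h
      · exact absurd h.symm hc.1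
      · linarith
    have h2b : 2 ≤ b := by
      rcases eq_or_lt_of_le hb with h|h
      · exact absurd h.symm hc.2
      · linarith
    have := hQ h2a h2b
    rw [heq] at key
    simp only [sub_self] at key
    linarith
  · rintro (rfl | rfl)
    · norm_num
    · have : Fz k a 1 = Fz k 1 a := by unfold Fz; ring
      rw [this]
      norm_num

lemma chooseTwo (m : ℕ) : 2 * Nat.choose m 2 = m * (m - 1) := by
  cases m with
  | zero => rfl
  | succ t =>
    rw [Nat.choose_two_right, Nat.succ_sub_one]
    exact Nat.mul_div_cancel' (by rw [Nat.mul_comm]; exact (Nat.even_mul_succ_self t).two_dvd) 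

lemma natstep (n k a b : ℕ) (hk : 1 ≤ k) (ha : 1 ≤ a) (hb : 1 ≤ b) (hn : n = k + a + b) :
    (k * ((k-1) * ((n-1)+(n-1))^2 + a * ((n-1)+(n - b - 1))^2 + b * ((n-1)+(n - a - 1))^2)
      + a * (k * ((n - b - 1)+(n-1))^2 + (a-1) * ((n - b - 1)+(n - b - 1))^2)
      + b * (k * ((n - a - 1)+(n-1))^2 + (b-1) * ((n - a - 1)+(n - a - 1))^2))
    ≤ 2 * (4 * Nat.choose k 2 * (n - 1) ^ 2 + 4 * Nat.choose (n - k - 1) 2 * (n - 2) ^ 2 +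
          k * (n - k - 1) * (2 * n - 3) ^ 2 + k * (n + k - 1) ^ 2)
  ∧ ((k * ((k-1) * ((n-1)+(n-1))^2 + a * ((n-1)+(n - b - 1))^2 + b * ((n-1)+(n - a - 1))^2)
      + a * (k * ((n - b - 1)+(n-1))^2 + (a-1) * ((n - b - 1)+(n - b - 1))^2)
      + b * (k * ((n - a - 1)+(n-1))^2 + (b-1) * ((n - a - 1)+(n - a - 1))^2))
    = 2 * (4 * Nat.choose k 2 * (n - 1) ^ 2 + 4 * Nat.choose (n - k - 1) 2 * (n - 2) ^ 2 +
          k * (n - k - 1) * (2 * n - 3) ^ 2 + k * (n + k - 1) ^ 2) ↔ a = 1 ∨ b = 1) := by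
  have h2' : 2 * (4 * Nat.choose k 2 * (n - 1) ^ 2 + 4 * Nat.choose (n - k - 1) 2 * (n - 2) ^ 2 +
          k * (n - k - 1) * (2 * n - 3) ^ 2 + k * (n + k - 1) ^ 2)
      = 4 * (2 * Nat.choose k 2) * (n-1)^2 + 4 * (2 * Nat.choose (n-k-1) 2) * (n-2)^2
        + 2 * (k * (n-k-1) * (2*n-3)^2) + 2 * (k * (n+k-1)^2) := by ring
  rw [h2', chooseTwo, chooseTwo]
  have h3 : n - k - 1 - 1 = n - k - 2 := by omega
  rw [h3]
  have c1 : 1 ≤ n := by omega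
  have c2 : b ≤ n := by omega
  have c3 : 1 ≤ n - b := by omega
  have c4 : a ≤ n := by omega
  have c5 : 1 ≤ n - a := by omega
  have c6 : k ≤ n := by omega
  have c7 : 1 ≤ n - k := by omega
  have c8 : 2 ≤ n - k := by omega
  have c9 : 2 ≤ n := by omega
  have c10 : 3 ≤ 2 * n := by omega
  have c11 : 1 ≤ n + k := by omega
  obtain ⟨hle, hiff⟩ := arithZ (k : ℤ) (a : ℤ) (b : ℤ)
    (by exact_mod_cast hk) (by exact_mod_cast ha) (by exact_mod_cast hb)
  have hnz : (n : ℤ) = (k : ℤ) + a + b := by exact_mod_cast hn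
  constructor
  · zify [hk, ha, hb, c1, c2, c3, c4, c5, c6, c7, c8, c9, c10, c11]
    rw [hnz]
    unfold Fz at hle
    linarith [hle]
  · constructor
    · intro h
      zify [hk, ha, hb, c1, c2, c3, c4, c5, c6, c7, c8, c9, c10, c11] at h
      rw [hnz] at h
      have key : Fz (k : ℤ) a b = Fz (k : ℤ) 1 ((a:ℤ) + b - 1) := by
        unfold Fz; linear_combination h
      have := hiff.mp key
      rcases this with h1 | h1
      · left; exact_mod_cast h1
      · right; exact_mod_cast h1
    · intro h
      have key : Fz (k : ℤ) a b = Fz (k : ℤ) 1 ((a:ℤ) + b - 1) := by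
        apply hiff.mpr
        rcases h with rfl | rfl
        · left; norm_num
        · right; norm_num
      zify [hk, ha, hb, c1, c2, c3, c4, c5, c6, c7, c8, c9, c10, c11]
      rw [hnz]
      unfold Fz at key
      linear_combination key

lemma degree_iso {V W : Type*} [Fintype V] [Fintype W] {G : SimpleGraph V} {H : SimpleGraph W}
    (φ : G ≃g H) (v : V) : H.degree (φ v) = G.degree v := by
  classical
  rw [← SimpleGraph.card_neighborSet_eq_degree, ← SimpleGraph.card_neighborSet_eq_degree]
  exact Fintype.card_congr (φ.mapNeighborSet v).symm

lemma hz_iso {V W : Type*} [Fintype V] [Fintype W] {G : SimpleGraph V} {H : SimpleGraph W}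
    (φ : G ≃g H) : hyperZagreb G = hyperZagreb H := by
  classical
  rw [hyperZagreb_def, hyperZagreb_def]
  refine Finset.sum_bij' (fun e _ => Sym2.map φ e) (fun e _ => Sym2.map φ.symm e)
    ?_ ?_ ?_ ?_ ?_
  · intro e he
    induction e with
    | _ u v =>
      rw [SimpleGraph.mem_edgeFinset, SimpleGraph.mem_edgeSet] at he
      simpa using φ.map_adj_iff.mpr he
  · intro e he
    induction e with
    | _ u v =>
      rw [SimpleGraph.mem_edgeFinset, SimpleGraph.mem_edgeSet] at he
      simpa using φ.symm.map_adj_iff.mpr he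
  · intro e _
    induction e with
    | _ u v => simp
  · intro e _
    induction e with
    | _ u v => simp
  · intro e he
    induction e with
    | _ u v => simp [wt, degree_iso φ]

lemma exists_partition {V : Type*} [Fintype V] (G : SimpleGraph V) (s : Set V)
    (hnc : ¬(G.induce sᶜ).Connected) (hne : sᶜ.Nonempty) :
    ∃ A B : Finset V, Disjoint A B ∧ A.Nonempty ∧ B.Nonempty ∧
      ((A : Set V) ∪ (B : Set V) = sᶜ) ∧ G ≤ compGraphF A B := by
  classical
  haveI : Nonempty (sᶜ : Set V) := hne.to_subtype
  have hnp : ¬(G.induce sᶜ).Preconnected := fun hp => hnc ⟨hp⟩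
  rw [SimpleGraph.Preconnected] at hnp
  push_neg at hnp
  obtain ⟨u, v, huv⟩ := hnp
  set Aset : Set V := {x | ∃ hx : x ∈ sᶜ, (G.induce sᶜ).Reachable u ⟨x, hx⟩} with hAset
  set Bset : Set V := sᶜ \ Aset with hBset
  refine ⟨Aset.toFinset, Bset.toFinset, ?_, ?_, ?_, ?_, ?_⟩
  · rw [Finset.disjoint_left]
    intro x hx hx'
    rw [Set.mem_toFinset] at hx hx'
    exact hx'.2 hx
  · exact ⟨(u : V), by rw [Set.mem_toFinset]; exact ⟨u.2, by rw [Subtype.coe_eta]⟩⟩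
  · refine ⟨(v : V), ?_⟩
    rw [Set.mem_toFinset]
    refine ⟨v.2, fun hv => ?_⟩
    obtain ⟨hv', hr⟩ := hv
    exact huv (by rwa [Subtype.coe_eta] at hr)
  · rw [Set.coe_toFinset, Set.coe_toFinset]
    apply Set.eq_of_subset_of_subset
    · rintro x (hx | hx)
      · exact hx.1
      · exact hx.1
    · intro x hx
      by_cases hA : x ∈ Aset
      · exact Or.inl hA
      · exact Or.inr ⟨hx, hA⟩
  · intro x y hadj
    have hne' : x ≠ y := hadj.ne
    have hedge : ∀ z w : V, z ∈ Aset → w ∈ Bset → ¬G.Adj z w := by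
      rintro z w ⟨hz, hrz⟩ ⟨hw, hwA⟩ hzw
      refine hwA ⟨hw, hrz.trans (SimpleGraph.Adj.reachable ?_)⟩
      exact hzw
    refine And.intro hne' (And.intro ?_ ?_)
    · rintro ⟨hxA, hyB⟩
      rw [Set.mem_toFinset] at hxA hyB
      exact hedge x y hxA hyB hadj
    · rintro ⟨hxB, hyA⟩
      rw [Set.mem_toFinset] at hxB hyA
      exact hedge y x hyA hxB hadj.symm

lemma joinOneClique_eq (n k : ℕ) (hk : k < n) :
    joinOneClique n k = compGraphF {(⟨k, hk⟩ : Fin n)} (Ioi (⟨k, hk⟩ : Fin n)) := by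
  ext i j
  simp only [joinOneClique, compGraphF, mem_singleton, mem_Ioi, Fin.lt_def, ne_eq, Fin.ext_iff]
  constructor
  · rintro ⟨h1, h2⟩
    refine ⟨h1, ?_, ?_⟩ <;> omega
  · rintro ⟨h1, h2, h3⟩
    refine ⟨h1, ?_⟩
    omega

lemma fin_S_eq (n k : ℕ) (hk : k < n) :
    (univ \ ({(⟨k, hk⟩ : Fin n)} ∪ Ioi (⟨k, hk⟩ : Fin n))) = Iio (⟨k, hk⟩ : Fin n) := by
  ext i
  simp only [mem_sdiff, mem_univ, true_and, mem_union, mem_singleton, mem_Ioi, mem_Iio,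
    Fin.lt_def, Fin.ext_iff]
  omega

lemma iso_comp {V : Type*} [Fintype V] (A B : Finset V) (hd : Disjoint A B) (n k : ℕ)
    (hn : Fintype.card V = n) (hA : #A = 1) (hS : #(univ \ (A ∪ B)) = k) (hkn : k < n) :
    Nonempty (compGraphF A B ≃g joinOneClique n k) := by
  classical
  set S : Finset V := univ \ (A ∪ B) with hSdef
  have hSA : Disjoint S A := Finset.sdiff_disjoint.mono_right subset_union_left
  have hSB : Disjoint S B := Finset.sdiff_disjoint.mono_right subset_union_right
  have hcover : ∀ x : V, x ∈ S ∨ x ∈ A ∨ x ∈ B := by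
    intro x
    by_cases hA' : x ∈ A
    · exact Or.inr (Or.inl hA')
    by_cases hB' : x ∈ B
    · exact Or.inr (Or.inr hB')
    · exact Or.inl (by rw [hSdef]; simp [hA', hB'])
  have hB : #B = n - k - 1 := by
    have h1 : #S + (#A + #B) = n := by
      rw [← card_union_of_disjoint hd, ← card_union_of_disjoint (by
        rw [disjoint_union_right]; exact ⟨hSA, hSB⟩)]
      rw [← hn]
      congr 1
      apply Finset.eq_univ_iff_forall.mpr
      intro x
      rcases hcover x with h | h | h
      · exact mem_union_left _ h
      · exact mem_union_right _ (mem_union_left _ h)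
      · exact mem_union_right _ (mem_union_right _ h)
    omega
  rw [joinOneClique_eq n k hkn]
  let eS : ↥(S : Finset V) ≃ Fin k := Fintype.equivFinOfCardEq (by rw [Fintype.card_coe, hS])
  let eA : ↥(A : Finset V) ≃ Fin 1 := Fintype.equivFinOfCardEq (by rw [Fintype.card_coe, hA])
  let eB : ↥(B : Finset V) ≃ Fin (n - k - 1) :=
    Fintype.equivFinOfCardEq (by rw [Fintype.card_coe, hB])
  let f0 : (↥(S : Finset V) ⊕ (↥(A : Finset V) ⊕ ↥(B : Finset V))) → V :=
    Sum.elim Subtype.val (Sum.elim Subtype.val Subtype.val)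
  have hbij : Function.Bijective f0 := by
    constructor
    · rintro (x | x | x) (y | y | y) h <;>
        simp only [f0, Sum.elim_inl, Sum.elim_inr] at h
      · exact congrArg Sum.inl (Subtype.ext h)
      · exact absurd (h ▸ y.2) (Finset.disjoint_left.mp hSA x.2)
      · exact absurd (h ▸ y.2) (Finset.disjoint_left.mp hSB x.2)
      · exact absurd (h ▸ y.2) (Finset.disjoint_right.mp hSA x.2)
      · exact congrArg (Sum.inr ∘ Sum.inl) (Subtype.ext h)
      · exact absurd (h ▸ y.2) (Finset.disjoint_left.mp hd x.2)
      · exact absurd (h ▸ y.2) (Finset.disjoint_right.mp hSB x.2)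
      · exact absurd (h ▸ y.2) (Finset.disjoint_right.mp hd x.2)
      · exact congrArg (Sum.inr ∘ Sum.inr) (Subtype.ext h)
    · intro x
      rcases hcover x with h | h | h
      · exact ⟨Sum.inl ⟨x, h⟩, rfl⟩
      · exact ⟨Sum.inr (Sum.inl ⟨x, h⟩), rfl⟩
      · exact ⟨Sum.inr (Sum.inr ⟨x, h⟩), rfl⟩
  let e0 := Equiv.ofBijective f0 hbij
  let ψ : (Fin k ⊕ (Fin 1 ⊕ Fin (n - k - 1))) ≃ Fin n :=
    ((Equiv.refl (Fin k)).sumCongr finSumFinEquiv).trans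
      (finSumFinEquiv.trans (finCongr (by omega)))
  let φ : V ≃ Fin n := e0.symm.trans ((eS.sumCongr (eA.sumCongr eB)).trans ψ)
  have he0S : ∀ (x : V) (hx : x ∈ S), e0.symm x = Sum.inl ⟨x, hx⟩ := by
    intro x hx
    rw [Equiv.symm_apply_eq]
    rfl
  have he0A : ∀ (x : V) (hx : x ∈ A), e0.symm x = Sum.inr (Sum.inl ⟨x, hx⟩) := by
    intro x hx
    rw [Equiv.symm_apply_eq]
    rfl
  have he0B : ∀ (x : V) (hx : x ∈ B), e0.symm x = Sum.inr (Sum.inr ⟨x, hx⟩) := by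
    intro x hx
    rw [Equiv.symm_apply_eq]
    rfl
  have hφS : ∀ x ∈ S, (φ x : ℕ) < k := by
    intro x hx
    simp only [φ, Equiv.trans_apply, he0S x hx, Equiv.sumCongr_apply, Sum.map_inl, ψ,
      finSumFinEquiv_apply_left, finCongr_apply, Fin.coe_cast, Fin.coe_castAdd]
    exact (eS ⟨x, hx⟩).isLt
  have hφA : ∀ x ∈ A, (φ x : ℕ) = k := by
    intro x hx
    simp only [φ, Equiv.trans_apply, he0A x hx, Equiv.sumCongr_apply, Sum.map_inr, Sum.map_inl, ψ,
      finSumFinEquiv_apply_left, finSumFinEquiv_apply_right, finCongr_apply, Fin.coe_cast,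
      Fin.coe_castAdd, Fin.coe_natAdd]
    have : (eA ⟨x, hx⟩ : ℕ) = 0 := by omega
    omega
  have hφB : ∀ x ∈ B, k < (φ x : ℕ) := by
    intro x hx
    simp only [φ, Equiv.trans_apply, he0B x hx, Equiv.sumCongr_apply, Sum.map_inr, ψ,
      finSumFinEquiv_apply_left, finSumFinEquiv_apply_right, finCongr_apply, Fin.coe_cast,
      Fin.coe_castAdd, Fin.coe_natAdd]
    omega
  have hA' : ∀ z : V, (φ z : ℕ) = k ↔ z ∈ A := by
    intro z
    constructor
    · intro h
      rcases hcover z with hz | hz | hz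
      · exact absurd h (by have := hφS z hz; omega)
      · exact hz
      · exact absurd h (by have := hφB z hz; omega)
    · exact hφA z
  have hB' : ∀ z : V, k < (φ z : ℕ) ↔ z ∈ B := by
    intro z
    constructor
    · intro h
      rcases hcover z with hz | hz | hz
      · exact absurd h (by have := hφS z hz; omega)
      · exact absurd h (by have := hφA z hz; omega)
      · exact hz
    · exact hφB z
  refine ⟨{ toEquiv := φ, map_rel_iff' := ?_ }⟩
  intro x y
  show (compGraphF _ _).Adj (φ x) (φ y) ↔ (compGraphF A B).Adj x y
  simp only [compGraphF, mem_singleton, mem_Ioi, Fin.lt_def, ne_eq]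
  have m1 : ∀ z : V, (φ z = (⟨k, hkn⟩ : Fin n)) ↔ z ∈ A := by
    intro z
    rw [Fin.ext_iff]
    exact hA' z
  have m2 : ∀ z : V, ((⟨k, hkn⟩ : Fin n) : ℕ) < (φ z : ℕ) ↔ z ∈ B := by
    intro z
    exact hB' z
  rw [m1 x, m1 y, m2 x, m2 y, EmbeddingLike.apply_eq_iff_eq]

end comp2
end Aux

/-- A connected graph of order `n` with vertex connectivity `k` `(1 ≤ k ≤ n-2)`
satisfies the stated bound on `HM`, with equality iff `G ≅ (K₁ ∪ K_{n-k-1}) ∨ K_k`. -/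
theorem hyperZagreb_le_of_vertexConnectivity {V : Type*} [Fintype V] (G : SimpleGraph V)
    (n k : ℕ) (hn : Fintype.card V = n) (hconn : G.Connected)
    (h1 : 1 ≤ k) (h2 : k ≤ n - 2) (hk : HasVertexConnectivity G k) :
    hyperZagreb G ≤
        4 * Nat.choose k 2 * (n - 1) ^ 2 + 4 * Nat.choose (n - k - 1) 2 * (n - 2) ^ 2 +
          k * (n - k - 1) * (2 * n - 3) ^ 2 + k * (n + k - 1) ^ 2 ∧
      (hyperZagreb G =
          4 * Nat.choose k 2 * (n - 1) ^ 2 + 4 * Nat.choose (n - k - 1) 2 * (n - 2) ^ 2 +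
            k * (n - k - 1) * (2 * n - 3) ^ 2 + k * (n + k - 1) ^ 2 ↔
        Nonempty (G ≃g joinOneClique n k)) := by
  classical
  open Finset in
  obtain ⟨⟨s, hscard, hsnc⟩, -⟩ := hk
  have hn3 : k + 2 ≤ n := by omega
  have hncard : Fintype.card V = n := hn
  have hsne : sᶜ.Nonempty := by
    rw [Set.nonempty_compl]
    intro h
    rw [h, Set.ncard_univ, Nat.card_eq_fintype_card, hncard] at hscard
    omega
  obtain ⟨A, B, hd, hAne, hBne, hcup, hle⟩ := exists_partition G s hsnc hsne
  have hScard : #(univ \ (A ∪ B)) = k := by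
    have hSet : (univ \ (A ∪ B) : Finset V) = s.toFinset := by
      ext x
      simp only [mem_sdiff, mem_univ, true_and, mem_union, Set.mem_toFinset]
      have hx := Set.ext_iff.mp hcup x
      simp only [Set.mem_union, mem_coe, Set.mem_compl_iff] at hx
      tauto
    rw [hSet, ← Set.ncard_eq_toFinset_card', hscard]
  have ha1 : 1 ≤ #A := Nat.one_le_iff_ne_zero.mpr (Finset.card_ne_zero_of_mem hAne.choose_spec)
  have hb1 : 1 ≤ #B := Nat.one_le_iff_ne_zero.mpr (Finset.card_ne_zero_of_mem hBne.choose_spec)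
  have hnsum : n = k + #A + #B := by
    have hcov : (univ \ (A ∪ B)) ∪ (A ∪ B) = (univ : Finset V) := by
      ext x
      simp only [mem_union, mem_sdiff, mem_univ, true_and, mem_union]
      tauto
    have hdisj : Disjoint (univ \ (A ∪ B)) (A ∪ B) := Finset.sdiff_disjoint
    have := card_union_of_disjoint hdisj
    rw [hcov, card_univ, hncard, card_union_of_disjoint hd, hScard] at this
    omega
  have hHM2 := hz_comp A B hd
  rw [hncard, hScard] at hHM2
  obtain ⟨hstep_le, hstep_iff⟩ := natstep n k #A #B h1 ha1 hb1 hnsum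
  have key_le : 2 * hyperZagreb (compGraphF A B) ≤
      2 * (4 * Nat.choose k 2 * (n - 1) ^ 2 + 4 * Nat.choose (n - k - 1) 2 * (n - 2) ^ 2 +
        k * (n - k - 1) * (2 * n - 3) ^ 2 + k * (n + k - 1) ^ 2) := by
    rw [hHM2]; exact hstep_le
  have hGH := hz_mono hle
  have main_le : hyperZagreb G ≤
      4 * Nat.choose k 2 * (n - 1) ^ 2 + 4 * Nat.choose (n - k - 1) 2 * (n - 2) ^ 2 +
        k * (n - k - 1) * (2 * n - 3) ^ 2 + k * (n + k - 1) ^ 2 := by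
    omega
  have hkn : k < n := by omega
  refine ⟨main_le, ?_, ?_⟩
  · intro heq
    have e1 : hyperZagreb G = hyperZagreb (compGraphF A B) := by omega
    have hGeq : G = compGraphF A B := by
      by_contra hne
      exact absurd e1 (Nat.ne_of_lt (hz_strict_mono hle hne))
    have hNatEq := hstep_iff.mp (by omega)
    rcases hNatEq with hA1 | hB1
    · rw [hGeq]
      exact iso_comp A B hd n k hncard hA1 hScard hkn
    · rw [hGeq, compGraphF_comm]
      refine iso_comp B A hd.symm n k hncard hB1 ?_ hkn
      rw [union_comm]
      exact hScard
  · rintro ⟨φ⟩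
    have hd0 : Disjoint ({(⟨k, hkn⟩ : Fin n)} : Finset (Fin n)) (Ioi (⟨k, hkn⟩ : Fin n)) := by
      simp [Finset.disjoint_singleton_left]
    have h2' := hz_comp ({(⟨k, hkn⟩ : Fin n)} : Finset (Fin n)) (Ioi (⟨k, hkn⟩ : Fin n)) hd0
    have hinst : (fun a b => Classical.propDecidable (a = b) : DecidableEq (Fin n)) =
        instDecidableEqFin n := by
      funext a b
      exact Subsingleton.elim _ _
    rw [hinst] at h2'
    rw [card_sdiff_of_subset (subset_univ _), card_union_of_disjoint hd0, card_singleton, Fin.card_Ioi,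
      card_univ, Fintype.card_fin,
      show ((⟨k, hkn⟩ : Fin n) : ℕ) = k from rfl,
      show n - (1 + (n - 1 - k)) = k from by omega,
      show n - 1 - k = n - k - 1 from by omega] at h2'
    have hJstep := (natstep n k 1 (n - k - 1) h1 le_rfl (by omega) (by omega)).2.mpr (Or.inl rfl)
    have hJ : hyperZagreb (joinOneClique n k) =
        4 * Nat.choose k 2 * (n - 1) ^ 2 + 4 * Nat.choose (n - k - 1) 2 * (n - 2) ^ 2 +
          k * (n - k - 1) * (2 * n - 3) ^ 2 + k * (n + k - 1) ^ 2 := by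
      rw [joinOneClique_eq n k hkn]
      omega
    rw [hz_iso φ, hJ]
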